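/- Let q be even and let δ ∈ F_{q^6} \ F_{q^3}. Then the map x ↦ Q(x) = (Tr_{F_{q^3}/F_q}(x) + δx)^{1+q^3} is a permutation of F_{q^3} if and only if δ^{-1} + δ^{-q^3} ∈ F_q^*. -/

import Mathlib

/-!
Write `s = δ + δ^{q³}` and `N = δ^{1+q³}` for the trace and norm of `δ` over `F_{q³}`. Then
`Q x = t² + s t x + N x²` with `t = Tr x ∈ F_q`, and the condition says `s / N ∈ F_q^*`.

If `s / N ∉ F_q`, the functionals `Tr v` and `Tr ((N / s) v)` are independent, which yields
`u ≠ 0` and `x` with `Tr x = 0`, `Tr u = 1` and `Q x = Q (x + u)`.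

If `s = c N`, then `Q x = Q y` gives, after dividing by `N` and taking traces,
`(Tr x + Tr y)² (Tr N⁻¹ + c + 1) = 0`; once `Tr x = Tr y`, it factors as
`N (x + y) (x + y + c Tr x) = 0`, and both factors force `x = y`. The case `Tr N⁻¹ = c + 1` is
excluded by `δ ∉ F_{q³}`: for `a = δ⁻¹` we have `a^{q³} = a + c`, so `S = a + a^q + a^{q²}`
satisfies `S^{q³} = S + c` and `S² + c S = Tr N⁻¹`; `Tr N⁻¹ = c + 1` would put `S` in `F_q`.
-/

open Module Function Algebra FiniteField

theorem CharTwo.nsmul_eq_self_of_odd {R : Type*} [Ring R] [CharP R 2] {n : ℕ} (hn : Odd n)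
    (x : R) : n • x = x := by
  rw [nsmul_eq_mul, CharTwo.natCast_eq_ite, if_neg (Nat.not_even_iff_odd.2 hn), one_mul]

theorem Algebra.trace_algebraMap_of_odd_finrank {K L : Type*} [Field K] [Field L] [Algebra K L]
    [CharP L 2] (hodd : Odd (finrank K L)) (a : K) :
    trace K L (algebraMap K L a) = a := by
  have : CharP K 2 := (RingHom.charP_iff_charP (algebraMap K L) 2).2 ‹_›
  rw [trace_algebraMap, CharTwo.nsmul_eq_self_of_odd hodd]

theorem Algebra.exists_trace_eq_one_and_trace_mul_eq {K L : Type*} [Field K] [Field L]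
    [Algebra K L] [FiniteDimensional K L] [Algebra.IsSeparable K L] {w : L}
    (hw : w ∉ Set.range (algebraMap K L)) (b : K) :
    ∃ v, trace K L v = 1 ∧ trace K L (w * v) = b := by
  set w' := w - algebraMap K L b
  obtain ⟨v, hv, hv'⟩ : ∃ v, trace K L (w' * v) = 0 ∧ trace K L v ≠ 0 := by
    by_contra! h
    have hker : ⨅ _ : Unit, LinearMap.ker (traceForm K L w') ≤ LinearMap.ker (trace K L) :=
      fun v hv ↦ h v (by simpa using hv)
    obtain ⟨μ, hμ⟩ :=
      Submodule.mem_span_singleton.1 (by simpa using mem_span_of_iInf_ker_le_ker hker)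
    have : 1 - algebraMap K L μ * w' = 0 := (traceForm_nondegenerate K L).1 _ fun v ↦ by
      have := LinearMap.congr_fun hμ v
      simp only [LinearMap.smul_apply, traceForm_apply, smul_eq_mul] at this
      rw [traceForm_apply, sub_mul, one_mul, mul_assoc, ← smul_def, map_sub, map_smul,
        smul_eq_mul, this, sub_self]
    have hw' : w' = algebraMap K L μ⁻¹ := by
      rw [map_inv₀]
      exact eq_inv_of_mul_eq_one_right (sub_eq_zero.1 this).symm
    exact hw ⟨μ⁻¹ + b, by rw [map_add, ← hw', sub_add_cancel]⟩
  refine ⟨(trace K L v)⁻¹ • v, by simp [hv'], ?_⟩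
  have : w = w' + algebraMap K L b := by simp [w']
  rw [this, add_mul, map_add, mul_smul_comm, map_smul, hv, ← Algebra.smul_def, map_smul, map_smul]
  simp [hv']

namespace FiniteField

variable {K L : Type*} [Field K] [Field L] [Algebra K L]

theorem trace_pow_expChar [Finite L] (p : ℕ) [ExpChar L p] (x : L) :
    trace K L (x ^ p) = trace K L x ^ p := by
  apply (algebraMap K L).injective
  simp only [map_pow, algebraMap_trace_eq_sum_pow, sum_pow_char, pow_right_comm x p]

theorem mem_range_algebraMap_iff_pow_natCard_eq [Finite L] (y : L) :
    y ∈ Set.range (algebraMap K L) ↔ y ^ Nat.card K = y := by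
  have := Finite.of_injective _ (algebraMap K L).injective
  have := Fintype.ofFinite K
  rw [IsGalois.mem_range_algebraMap_iff_fixed]
  refine ⟨fun h ↦ ?_, fun h f ↦ ?_⟩
  · simpa [Nat.card_eq_fintype_card] using h (frobeniusAlgEquivOfAlgebraic K L)
  · obtain ⟨n, rfl⟩ := (bijective_frobeniusAlgEquivOfAlgebraic_pow K L).2 f
    rw [AlgEquiv.coe_pow]
    exact iterate_fixed (by simpa [Nat.card_eq_fintype_card] using h) n

section QuadraticExtension

variable {E : Type*} [Field E] [Algebra L E] [Finite E] (h : finrank L E = 2)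
include h

theorem algebraMap_trace_eq_add_pow (δ : E) :
    algebraMap L E (trace L E δ) = δ + δ ^ Nat.card L := by
  simp [algebraMap_trace_eq_sum_pow, h, Finset.sum_range_succ]

theorem algebraMap_norm_eq_mul_pow (δ : E) :
    algebraMap L E (Algebra.norm L δ) = δ * δ ^ Nat.card L := by
  simp [algebraMap_norm_eq_prod_pow, h, Finset.prod_range_succ]

theorem pow_one_add_natCard_eq_algebraMap_norm (y : E) :
    y ^ (1 + Nat.card L) = algebraMap L E (Algebra.norm L y) := by
  rw [algebraMap_norm_eq_mul_pow h, pow_add, pow_one]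

theorem norm_algebraMap_add_mul_algebraMap (δ : E) (t x : L) :
    Algebra.norm L (algebraMap L E t + δ * algebraMap L E x) =
      t ^ 2 + trace L E δ * t * x + Algebra.norm L δ * x ^ 2 := by
  have := Finite.of_injective _ (algebraMap L E).injective
  have := Fintype.ofFinite L
  have hσ (y : E) : y ^ Nat.card L = frobeniusAlgHom L E y := by
    rw [coe_frobeniusAlgHom, Nat.card_eq_fintype_card]
  apply (algebraMap L E).injective
  simp only [algebraMap_norm_eq_mul_pow h, algebraMap_trace_eq_add_pow h, hσ, map_add, map_mul,
    map_pow, AlgHom.commutes]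
  ring

theorem trace_ne_zero_of_notMem_range [CharP E 2] {δ : E}
    (hδ : δ ∉ Set.range (algebraMap L E)) : trace L E δ ≠ 0 := fun h0 ↦
  hδ <| (mem_range_algebraMap_iff_pow_natCard_eq δ).2 <| by
    rw [eq_comm, ← CharTwo.add_eq_zero, ← algebraMap_trace_eq_add_pow h, h0, map_zero]

theorem inv_add_inv_pow_natCard {δ : E} (hδ : δ ≠ 0) :
    δ⁻¹ + (δ ^ Nat.card L)⁻¹ = algebraMap L E (trace L E δ / Algebra.norm L δ) := by
  rw [map_div₀, algebraMap_trace_eq_add_pow h, algebraMap_norm_eq_mul_pow h]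
  field_simp
  ring

end QuadraticExtension

theorem sq_add_mul_ne_of_pow_natCard_eq_add {E : Type*} [Field E] [Algebra L E] [Algebra K E]
    [IsScalarTower K L E] [Finite E] [CharP E 2] {c : K} (hc : c ≠ 0) {S : E}
    (hS : S ^ Nat.card L = S + algebraMap K E c) :
    S ^ 2 + algebraMap K E c * S ≠ algebraMap K E (c + 1) := by
  have := Finite.of_injective _ (algebraMap L E).injective
  have := Finite.of_injective _ (algebraMap K L).injective
  have := Fintype.ofFinite K
  intro h
  obtain ⟨k, rfl⟩ : S ∈ Set.range (algebraMap K E) := by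
    have : (S + 1) * (S + (1 + algebraMap K E c)) = 0 := by
      rw [map_add, map_one] at h
      linear_combination h + (S + (1 + algebraMap K E c)) * CharTwo.two_eq_zero (R := E)
    rcases mul_eq_zero.1 this with h1 | h1
    · exact ⟨1, by rw [map_one, CharTwo.add_eq_zero.1 h1]⟩
    · exact ⟨1 + c, by rw [map_add, map_one, CharTwo.add_eq_zero.1 h1]⟩
  refine hc ((algebraMap K E).injective ?_)
  rw [map_zero, ← add_eq_left (a := algebraMap K E k), ← hS, ← map_pow,
    Module.natCard_eq_pow_finrank (K := K), Nat.card_eq_fintype_card, pow_card_pow]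

theorem trace_ne_add_one_of_pow_natCard_eq_add {E : Type*} [Field E] [Algebra L E] [Algebra K E]
    [IsScalarTower K L E] [Finite E] [CharP E 2]
    (hodd : Odd (finrank K L)) {a : E} {c : K} (hc : c ≠ 0)
    (ha : a ^ Nat.card L = a + algebraMap K E c) {m : L}
    (hm : algebraMap L E m = a * (a + algebraMap K E c)) :
    trace K L m ≠ c + 1 := by
  have := Finite.of_injective _ (algebraMap L E).injective
  have := Finite.of_injective _ (algebraMap K L).injective
  have := Fintype.ofFinite K
  have : CharP K 2 := (RingHom.charP_iff_charP (algebraMap K E) 2).2 ‹_›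
  set φ := frobeniusAlgHom K E
  have hφ (i : ℕ) (y : E) : (φ ^ i) y = y ^ Nat.card K ^ i := by
    rw [AlgHom.coe_pow, coe_frobeniusAlgHom, pow_iterate, Nat.card_eq_fintype_card]
  have hL : Nat.card L = Nat.card K ^ finrank K L := Module.natCard_eq_pow_finrank
  set S := ∑ i ∈ Finset.range (finrank K L), (φ ^ i) a
  have hS : S ^ Nat.card L = S + algebraMap K E c := by
    have hφn (i : ℕ) : (φ ^ finrank K L) ((φ ^ i) a) = (φ ^ i) a + algebraMap K E c := by
      rw [← AlgHom.mul_apply, ← pow_add, add_comm, pow_add, AlgHom.mul_apply, hφ _ a, ← hL,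
        ha, map_add, AlgHom.commutes]
    rw [hL, ← hφ, map_sum]
    simp only [hφn, Finset.sum_add_distrib, Finset.sum_const, Finset.card_range,
      CharTwo.nsmul_eq_self_of_odd hodd]
    rfl
  have htr : algebraMap K E (trace K L m) = S ^ 2 + algebraMap K E c * S := by
    rw [IsScalarTower.algebraMap_apply K L E, algebraMap_trace_eq_sum_pow, map_sum,
      CharTwo.sum_sq, Finset.mul_sum, ← Finset.sum_add_distrib]
    refine Finset.sum_congr rfl fun i _ ↦ ?_
    rw [map_pow, hm, ← hφ, map_mul, map_add, AlgHom.commutes]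
    ring
  intro h
  exact sq_add_mul_ne_of_pow_natCard_eq_add hc hS (by rw [← htr, h])

end FiniteField

noncomputable def traceQuadMap (K : Type*) {L : Type*} [Field K] [Field L] [Algebra K L]
    (s N x : L) : L :=
  algebraMap K L (trace K L x) ^ 2 + s * algebraMap K L (trace K L x) * x + N * x ^ 2

section TraceQuadMap

variable {K L : Type*} [Field K] [Field L] [Algebra K L] [CharP L 2]

theorem traceQuadMap_add_traceQuadMap (s N x y : L) :
    traceQuadMap K s N x + traceQuadMap K s N y =
      algebraMap K L (trace K L x + trace K L y) ^ 2
        + s * (algebraMap K L (trace K L x) * x + algebraMap K L (trace K L y) * y)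
        + N * (x + y) ^ 2 := by
  rw [map_add, CharTwo.add_sq, CharTwo.add_sq, traceQuadMap, traceQuadMap]
  ring

theorem not_injective_traceQuadMap [Finite L] {s N : L} (hs : s ≠ 0)
    (hNs : N / s ∉ Set.range (algebraMap K L)) : ¬ Injective (traceQuadMap K s N) := by
  have : CharP K 2 := (RingHom.charP_iff_charP (algebraMap K L) 2).2 ‹_›
  obtain ⟨v, hv, hNv⟩ := exists_trace_eq_one_and_trace_mul_eq hNs (trace K L s⁻¹ + 1)
  obtain ⟨u, rfl⟩ := isSquare_of_charTwo' v
  have hu : trace K L u = 1 := by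
    rw [← CharTwo.sq_inj, one_pow, ← trace_pow_expChar, sq, hv]
  set x := s⁻¹ + u + N / s * (u * u)
  have hx : trace K L x = 0 := by
    rw [map_add, map_add, hNv, hu, add_add_add_comm, CharTwo.add_self_eq_zero,
      CharTwo.add_self_eq_zero, add_zero]
  have hxu : trace K L (x + u) = 1 := by rw [map_add, hx, hu, zero_add]
  have hQ : traceQuadMap K s N x = traceQuadMap K s N (x + u) := by
    simp only [traceQuadMap, hx, hxu, map_zero, map_one, x]
    linear_combination (-(1 + N * u ^ 2)) * mul_inv_cancel₀ hs
      - (1 + s * u + N * u ^ 2 + N * x * u) * CharTwo.two_eq_zero (R := L)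
  have hu0 : u ≠ 0 := by rintro rfl; simp at hu
  exact fun h ↦ hu0 (add_eq_left.1 (h hQ).symm)

theorem trace_eq_of_traceQuadMap_eq [Finite L] {s N : L} {c : K} (hN : N ≠ 0)
    (hs : s = algebraMap K L c * N) (htr : trace K L N⁻¹ ≠ c + 1) {x y : L}
    (hxy : traceQuadMap K s N x = traceQuadMap K s N y) : trace K L x = trace K L y := by
  have : CharP K 2 := (RingHom.charP_iff_charP (algebraMap K L) 2).2 ‹_›
  have key := traceQuadMap_add_traceQuadMap (K := K) s N x y
  rw [hxy, CharTwo.add_self_eq_zero, hs] at key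
  set a := trace K L x
  set b := trace K L y
  have h : (a + b) ^ 2 • N⁻¹ + (c * a) • x + (c * b) • y + (x + y) ^ 2 = 0 := by
    simp only [Algebra.smul_def, map_mul, map_pow]
    linear_combination (-N⁻¹) * key
      - (algebraMap K L c * (algebraMap K L a * x + algebraMap K L b * y) + (x + y) ^ 2)
        * mul_inv_cancel₀ hN
  have h := congrArg (trace K L) h
  simp only [map_add, map_smul, smul_eq_mul, trace_pow_expChar, map_zero] at h
  have : (a + b) ^ 2 * (trace K L N⁻¹ + (c + 1)) = 0 := by
    rw [CharTwo.add_sq] at h ⊢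
    linear_combination h
  rcases mul_eq_zero.1 this with h | h
  · exact CharTwo.add_eq_zero.1 (pow_eq_zero_iff two_ne_zero |>.1 h)
  · exact absurd (CharTwo.add_eq_zero.1 h) htr

theorem injective_traceQuadMap [Finite L] (hodd : Odd (finrank K L)) {s N : L} {c : K}
    (hN : N ≠ 0) (hs : s = algebraMap K L c * N) (htr : trace K L N⁻¹ ≠ c + 1) :
    Injective (traceQuadMap K s N) := by
  have : CharP K 2 := (RingHom.charP_iff_charP (algebraMap K L) 2).2 ‹_›
  intro x y hxy
  have hxy_tr := trace_eq_of_traceQuadMap_eq hN hs htr hxy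
  have key := traceQuadMap_add_traceQuadMap (K := K) s N x y
  rw [hxy, hxy_tr, CharTwo.add_self_eq_zero, CharTwo.add_self_eq_zero, map_zero, hs] at key
  set b := trace K L y
  have h : N * ((x + y) * (x + y + algebraMap K L (c * b))) = 0 := by
    rw [map_mul]
    linear_combination -key
  rw [← CharTwo.add_eq_zero]
  rcases (mul_eq_zero.1 h).resolve_left hN |> mul_eq_zero.1 with h | h
  · exact h
  · have hsum := CharTwo.add_eq_zero.1 h
    have hcb : c * b = 0 := by
      rw [← trace_algebraMap_of_odd_finrank hodd (c * b), ← hsum, map_add, hxy_tr]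
      exact CharTwo.add_self_eq_zero b
    rw [hsum, hcb, map_zero]

end TraceQuadMap

theorem bijective_traceQuadMap_iff {K L E : Type*} [Field K] [Field L] [Field E] [Algebra K L]
    [Algebra L E] [Algebra K E] [IsScalarTower K L E] [Finite E] [CharP E 2]
    (hodd : Odd (finrank K L)) (h2 : finrank L E = 2) {δ : E}
    (hδ : δ ∉ Set.range (algebraMap L E)) :
    Bijective (traceQuadMap K (trace L E δ) (Algebra.norm L δ)) ↔
      ∃ c : K, c ≠ 0 ∧ δ⁻¹ + (δ ^ Nat.card L)⁻¹ = algebraMap K E c := by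
  have := Finite.of_injective _ (algebraMap L E).injective
  have : CharP L 2 := (RingHom.charP_iff_charP (algebraMap L E) 2).2 ‹_›
  have : FiniteDimensional L E := Module.finite_of_finrank_eq_succ h2
  set s := trace L E δ
  set N := Algebra.norm L δ
  have hδ0 : δ ≠ 0 := by rintro rfl; exact hδ ⟨0, map_zero _⟩
  have hs0 : s ≠ 0 := trace_ne_zero_of_notMem_range h2 hδ
  have hN0 : N ≠ 0 := Algebra.norm_ne_zero_iff.2 hδ0
  rw [inv_add_inv_pow_natCard h2 hδ0]
  constructor
  · intro hbij
    obtain ⟨c, hc⟩ : s / N ∈ Set.range (algebraMap K L) := by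
      by_contra h
      refine not_injective_traceQuadMap hs0 (fun ⟨c, hc⟩ ↦ h ⟨c⁻¹, ?_⟩) hbij.1
      rw [map_inv₀, hc, inv_div]
    refine ⟨c, ?_, by rw [← hc, ← IsScalarTower.algebraMap_apply]⟩
    rintro rfl
    exact div_ne_zero hs0 hN0 (by rw [← hc, map_zero])
  · rintro ⟨c, hc0, hc⟩
    have hsN : s = algebraMap K L c * N := by
      rw [IsScalarTower.algebraMap_apply K L E] at hc
      rw [← (algebraMap L E).injective hc, div_mul_cancel₀ _ hN0]
    have htr : trace K L N⁻¹ ≠ c + 1 := by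
      have hc' := inv_add_inv_pow_natCard h2 hδ0 ▸ hc
      refine trace_ne_add_one_of_pow_natCard_eq_add hodd hc0 (a := δ⁻¹) ?_ ?_
      · rw [inv_pow, ← hc', CharTwo.add_cancel_left]
      · rw [← hc', CharTwo.add_cancel_left, map_inv₀, algebraMap_norm_eq_mul_pow h2, mul_inv]
    exact Finite.injective_iff_bijective.1 (injective_traceQuadMap hodd hN0 hsN htr)

theorem trace_norm_perm_iff_general (q : ℕ) (hq : Even q)
    (K L3 E : Type) [Field K] [Fintype K] [Field L3] [Field E]
    [Algebra K L3] [Algebra L3 E] [Algebra K E] [IsScalarTower K L3 E]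
    (hcard : Fintype.card K = q)
    (hdim : Module.finrank K L3 = 3) (hdim2 : Module.finrank L3 E = 2)
    (δ : E) (hδ : δ ∉ Set.range (algebraMap L3 E))
    (Q : L3 → L3)
    (hQ : ∀ x, algebraMap L3 E (Q x) =
      (algebraMap K E (Algebra.trace K L3 x) + δ * algebraMap L3 E x) ^ (1 + q ^ 3)) :
    Function.Bijective Q ↔
      ∃ c : K, c ≠ 0 ∧ δ⁻¹ + (δ ^ (q ^ 3))⁻¹ = algebraMap K E c := by
  have : CharP K 2 := ringChar.of_eq (even_card_iff_char_two.2 (hcard ▸ Nat.even_iff.1 hq))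
  have : FiniteDimensional K L3 := Module.finite_of_finrank_eq_succ hdim
  have : FiniteDimensional L3 E := Module.finite_of_finrank_eq_succ hdim2
  have : Finite L3 := Module.finite_of_finite K
  have : Finite E := Module.finite_of_finite L3
  have : CharP E 2 := charP_of_injective_algebraMap (algebraMap K E).injective 2
  have hL3 : Nat.card L3 = q ^ 3 := by
    rw [Module.natCard_eq_pow_finrank (K := K), hdim, Nat.card_eq_fintype_card, hcard]
  have hQ' : Q = traceQuadMap K (trace L3 E δ) (Algebra.norm L3 δ) :=
    funext fun x ↦ (algebraMap L3 E).injective <| by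
      rw [hQ, ← hL3, pow_one_add_natCard_eq_algebraMap_norm hdim2,
        IsScalarTower.algebraMap_apply K L3 E, norm_algebraMap_add_mul_algebraMap hdim2]
      rfl
  rw [hQ', ← hL3]
  exact bijective_traceQuadMap_iff (by rw [hdim]; decide) hdim2 hδ

/-- **Lemma, even 3-dim.** For `q` even and `δ ∈ F_{q⁶} \ F_{q³}`,
`x ↦ (Tr_{F_{q³}/F_q}(x) + δx)^{1+q³}` permutes `F_{q³}` iff
`δ⁻¹ + δ^{-q³} ∈ F_q^*`. -/
theorem trace_norm_perm_iff (q : ℕ) (hq : Even q) (hq' : IsPrimePow q)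
    (K L3 E : Type) [Field K] [Fintype K] [Field L3] [Field E]
    [Algebra K L3] [Algebra L3 E] [Algebra K E] [IsScalarTower K L3 E]
    (hcard : Fintype.card K = q)
    (hdim : Module.finrank K L3 = 3) (hdim2 : Module.finrank L3 E = 2)
    (δ : E) (hδ : δ ∉ Set.range (algebraMap L3 E))
    (Q : L3 → L3)
    (hQ : ∀ x, algebraMap L3 E (Q x) =
      (algebraMap K E (Algebra.trace K L3 x) + δ * algebraMap L3 E x) ^ (1 + q ^ 3)) :
    Function.Bijective Q ↔
      ∃ c : K, c ≠ 0 ∧ δ⁻¹ + (δ ^ (q ^ 3))⁻¹ = algebraMap K E c :=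
  trace_norm_perm_iff_general q hq K L3 E hcard hdim hdim2 δ hδ Q hQ
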